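/- Let d ≥ 1, n = d(d+1), and let b_1, …, b_n be unit vectors in ℂ^d such that for every j ≠ k, |⟨b_j, b_k⟩|² equals either 0 or 1/d. Let A be the n×n matrix with A_{j,k} = 1 if j ≠ k and ⟨b_j, b_k⟩ = 0, and A_{j,k} = 0 otherwise. Then the eigenvalues of A are −1 with multiplicity d² − 1 and d − 1 with multiplicity d + 1; equivalently, the characteristic polynomial of A is (x+1)^{d²−1}(x−(d−1))^{d+1}. -/

import Mathlib

/-!
Put `B = (d - 1) • 1 - A`. The number `|⟪b j, b k⟫|² - 1/d` is the Hilbert–Schmidt inner product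
of the traceless matrices `b j b jᴴ - I/d`, and the hypotheses make `d (|⟪b j, b k⟫|² - 1/d)`
equal to `B j k`. So `B` is `d` times a Gram matrix of vectors in a space of dimension `d² - 1`:
it is positive semidefinite of rank at most `d² - 1`. Its trace is `n (d - 1) = (d² - 1) d`, and
since `A` is the adjacency matrix of a graph, `tr (B²) = d tr B - 𝟙ᵀ B 𝟙 ≤ d tr B`. For the
eigenvalues `μ` of `B` this says `∑ μ = (d² - 1) d` and `∑ μ² ≤ d ∑ μ` with at most `d² - 1` of
them nonzero, which forces exactly `d² - 1` of them to be `d` and the others `0`.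
-/

open Matrix Polynomial
open scoped ComplexOrder ComplexConjugate InnerProductSpace

open Finset in
theorem eq_zero_or_eq_and_card_of_sum_sq_le {ι : Type*} [Fintype ι] (μ : ι → ℝ) {r : ℕ} {c : ℝ}
    (hc : c ≠ 0) (hcard : #{i | μ i ≠ 0} ≤ r) (hsum : ∑ i, μ i = r * c)
    (hsq : ∑ i, μ i ^ 2 ≤ c * ∑ i, μ i) :
    (∀ i, μ i = 0 ∨ μ i = c) ∧ #{i | μ i = c} = r := by
  classical
  set s : Finset ι := {i | μ i ≠ 0}
  have hsum_s : ∑ i ∈ s, μ i = r * c := (sum_filter_ne_zero _).trans hsum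
  have hsq_s : ∑ i ∈ s, μ i ^ 2 ≤ r * c ^ 2 := by
    rw [sum_filter_of_ne (p := fun i => μ i ≠ 0) fun i _ h hi => h (by simp [hi])]
    rw [hsum] at hsq
    linarith
  have hdev : ∑ i ∈ s, (μ i - c) ^ 2 = 0 := by
    refine le_antisymm ?_ (sum_nonneg fun i _ => sq_nonneg _)
    have hcardR : (#s : ℝ) ≤ r := by exact_mod_cast hcard
    calc ∑ i ∈ s, (μ i - c) ^ 2 = ∑ i ∈ s, μ i ^ 2 - 2 * c * ∑ i ∈ s, μ i + #s * c ^ 2 := by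
          simp only [sub_sq, sum_add_distrib, sum_sub_distrib, sum_const, nsmul_eq_mul,
            ← sum_mul, ← mul_sum]
          ring
      _ ≤ c ^ 2 * (#s - r) := by rw [hsum_s]; linarith
      _ ≤ 0 := mul_nonpos_of_nonneg_of_nonpos (sq_nonneg c) (by linarith)
  have hμs : ∀ i ∈ s, μ i = c := fun i hi =>
    sub_eq_zero.mp (pow_eq_zero_iff two_ne_zero |>.mp
      ((sum_eq_zero_iff_of_nonneg fun i _ => sq_nonneg _).mp hdev i hi))
  have hs : ({i | μ i = c} : Finset ι) = s :=
    filter_congr fun i _ => ⟨fun h => h ▸ hc, fun h => hμs i (by simpa [s] using h)⟩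
  refine ⟨fun i => (em (μ i = 0)).imp_right fun h => hμs i (by simpa [s] using h), ?_⟩
  have : (#s : ℝ) * c = r * c := by rw [← hsum_s, sum_congr rfl hμs, sum_const, nsmul_eq_mul]
  rw [hs]
  exact_mod_cast mul_right_cancel₀ hc this

namespace Matrix.IsHermitian

variable {n 𝕜 : Type*} [RCLike 𝕜] [Fintype n] [DecidableEq n] {B : Matrix n n 𝕜}

theorem trace_cfc (hB : B.IsHermitian) (f : ℝ → ℝ) :
    (cfc f B).trace = ∑ i, (f (hB.eigenvalues i) : 𝕜) := by
  rw [cfc_eq hB f, IsHermitian.cfc, Unitary.conjStarAlgAut_apply, trace_mul_cycle,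
    Unitary.coe_star_mul_self, one_mul, trace_diagonal]
  rfl

theorem cfc_const_sub (hB : B.IsHermitian) (a : ℝ) :
    cfc (fun x : ℝ => a - x) B = (a : 𝕜) • 1 - B := by
  have := hB.isSelfAdjoint
  rw [cfc_sub (fun _ : ℝ => a) (fun x => x) B, cfc_const a B, cfc_id' ℝ B,
    Algebra.algebraMap_eq_smul_one, RCLike.real_smul_eq_coe_smul (K := 𝕜)]

open Finset in
theorem charpoly_cfc_of_trace_mul_self_le (hB : B.IsHermitian) {r : ℕ} {c : ℝ} (hc : c ≠ 0)
    (hrank : B.rank ≤ r) (htr : B.trace = r * c) (htr2 : (B * B).trace ≤ c * B.trace)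
    (f : ℝ → ℝ) :
    (cfc f B).charpoly = (X - C (f c : 𝕜)) ^ r * (X - C (f 0 : 𝕜)) ^ (Fintype.card n - r) := by
  have hsum : ∑ i, hB.eigenvalues i = r * c := by
    rw [hB.trace_eq_sum_eigenvalues] at htr
    exact_mod_cast htr
  have hsq : ∑ i, hB.eigenvalues i ^ 2 ≤ c * ∑ i, hB.eigenvalues i := by
    rw [← sq, ← cfc_pow_id (R := ℝ) B 2 hB.isSelfAdjoint, hB.trace_cfc,
      hB.trace_eq_sum_eigenvalues] at htr2
    exact_mod_cast htr2
  have hcard : #{i | hB.eigenvalues i ≠ 0} ≤ r := by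
    rwa [hB.rank_eq_card_non_zero_eigs, Fintype.card_subtype] at hrank
  obtain ⟨hμ, hcount⟩ := eq_zero_or_eq_and_card_of_sum_sq_le _ hc hcard hsum hsq
  have hcount' : #{i | ¬hB.eigenvalues i = c} = Fintype.card n - r := by
    have := card_filter_add_card_filter_not (s := univ) (fun i => hB.eigenvalues i = c)
    rw [card_univ] at this
    omega
  rw [hB.charpoly_cfc_eq, ← prod_filter_mul_prod_filter_not univ (fun i => hB.eigenvalues i = c),
    prod_eq_pow_card fun i hi => by rw [(mem_filter.mp hi).2],
    prod_eq_pow_card fun i hi => by rw [(hμ i).resolve_right (mem_filter.mp hi).2],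
    hcount, hcount']

end Matrix.IsHermitian

namespace Matrix

variable {𝕜 E n : Type*} [RCLike 𝕜] [NormedAddCommGroup E] [InnerProductSpace 𝕜 E]
  [FiniteDimensional 𝕜 E] [Fintype n]

theorem rank_gram_le_finrank (v : n → E) : (gram 𝕜 v).rank ≤ Module.finrank 𝕜 E := by
  rw [gram_eq_conjTranspose_mul (stdOrthonormalBasis 𝕜 E)]
  exact (rank_mul_le_right _ _).trans ((rank_le_card_height _).trans_eq (Fintype.card_fin _))

theorem rank_gram_le_finrank_of_mem (K : Submodule 𝕜 E) {v : n → E} (hv : ∀ i, v i ∈ K) :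
    (gram 𝕜 v).rank ≤ Module.finrank 𝕜 K :=
  rank_gram_le_finrank (𝕜 := 𝕜) fun i => (⟨v i, hv i⟩ : K)

end Matrix

namespace SimpleGraph

variable {V : Type*} [Fintype V] [DecidableEq V] (G : SimpleGraph V) [DecidableRel G.Adj]

theorem trace_mul_self_add_dotProduct_mulVec {R : Type*} [CommRing R] (c : R) :
    trace ((c • 1 - G.adjMatrix R) * (c • 1 - G.adjMatrix R)) +
      1 ⬝ᵥ (c • 1 - G.adjMatrix R) *ᵥ 1 = (c + 1) * trace (c • 1 - G.adjMatrix R) := by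
  have hAA : trace (G.adjMatrix R * G.adjMatrix R) = Fintype.card G.Dart := by
    simp only [trace, diag_apply, adjMatrix_mul_self_apply_self, dart_card_eq_sum_degrees,
      Nat.cast_sum]
  have hA1 : 1 ⬝ᵥ G.adjMatrix R *ᵥ 1 = Fintype.card G.Dart := by
    rw [dotProduct_comm, natCast_card_dart_eq_dotProduct]
  simp only [Matrix.sub_mul, Matrix.mul_sub, Matrix.smul_mul, Matrix.mul_smul, Matrix.one_mul,
    Matrix.mul_one, trace_sub, trace_smul, trace_one, trace_adjMatrix, hAA, sub_mulVec,
    smul_mulVec, one_mulVec, dotProduct_sub, dotProduct_smul, hA1, one_dotProduct_one,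
    smul_eq_mul, mul_zero, sub_zero]
  ring

theorem trace_smul_one_sub_adjMatrix {R : Type*} [CommRing R] (c : R) :
    trace (c • 1 - G.adjMatrix R) = Fintype.card V * c := by
  rw [trace_sub, trace_smul, trace_one, trace_adjMatrix, sub_zero, smul_eq_mul, mul_comm]

theorem trace_mul_self_le_of_posSemidef {𝕜 : Type*} [RCLike 𝕜] {c : 𝕜}
    (hB : (c • 1 - G.adjMatrix 𝕜).PosSemidef) :
    trace ((c • 1 - G.adjMatrix 𝕜) * (c • 1 - G.adjMatrix 𝕜)) ≤
      (c + 1) * trace (c • 1 - G.adjMatrix 𝕜) := by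
  have hnn := hB.dotProduct_mulVec_nonneg 1
  rw [star_one] at hnn
  rw [← G.trace_mul_self_add_dotProduct_mulVec c]
  exact le_add_of_nonneg_right hnn

end SimpleGraph

section OuterVector

variable {𝕜 ι : Type*} [RCLike 𝕜] [Fintype ι]

/-- `outerVec v` and `identityVec 𝕜 ι` are the vectorisations of the matrices `v vᴴ` and `1`;
the inner product of `EuclideanSpace` on them is the Hilbert–Schmidt inner product. -/
def outerVec (v : EuclideanSpace 𝕜 ι) : EuclideanSpace 𝕜 (ι × ι) :=
  WithLp.toLp 2 fun p => v p.1 * conj (v p.2)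

variable (𝕜 ι) in
def identityVec [DecidableEq ι] : EuclideanSpace 𝕜 (ι × ι) :=
  WithLp.toLp 2 fun p => if p.1 = p.2 then 1 else 0

def tracelessOuterVec [DecidableEq ι] (v : EuclideanSpace 𝕜 ι) : EuclideanSpace 𝕜 (ι × ι) :=
  outerVec v - (Fintype.card ι : 𝕜)⁻¹ • identityVec 𝕜 ι

theorem inner_outerVec (v w : EuclideanSpace 𝕜 ι) :
    ⟪outerVec v, outerVec w⟫_𝕜 = (‖⟪v, w⟫_𝕜‖ ^ 2 : ℝ) := by
  rw [RCLike.ofReal_pow, ← RCLike.mul_conj]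
  simp only [outerVec, PiLp.inner_apply, RCLike.inner_apply, Fintype.sum_prod_type, map_sum,
    Finset.sum_mul_sum, map_mul, RCLike.conj_conj]
  exact Fintype.sum_congr _ _ fun a => Fintype.sum_congr _ _ fun a' => by ring

variable [DecidableEq ι]

theorem inner_identityVec_outerVec (v : EuclideanSpace 𝕜 ι) :
    ⟪identityVec 𝕜 ι, outerVec v⟫_𝕜 = ⟪v, v⟫_𝕜 := by
  simp only [identityVec, outerVec, PiLp.inner_apply, RCLike.inner_apply, Fintype.sum_prod_type]
  simp [mul_comm]

theorem inner_identityVec_self : ⟪identityVec 𝕜 ι, identityVec 𝕜 ι⟫_𝕜 = Fintype.card ι := by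
  simp only [identityVec, PiLp.inner_apply, RCLike.inner_apply, Fintype.sum_prod_type]
  simp

variable [Nonempty ι]

theorem identityVec_ne_zero : identityVec 𝕜 ι ≠ 0 := by
  intro h
  have := inner_identityVec_self (𝕜 := 𝕜) (ι := ι)
  rw [h, inner_zero_left] at this
  exact (Nat.cast_ne_zero.mpr Fintype.card_ne_zero) this.symm

theorem finrank_orthogonal_identityVec :
    Module.finrank 𝕜 (𝕜 ∙ identityVec 𝕜 ι)ᗮ = Fintype.card ι ^ 2 - 1 := by
  have := (𝕜 ∙ identityVec 𝕜 ι).finrank_add_finrank_orthogonal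
  rw [finrank_span_singleton identityVec_ne_zero, finrank_euclideanSpace, Fintype.card_prod]
    at this
  rw [sq]
  omega

theorem inner_tracelessOuterVec {v w : EuclideanSpace 𝕜 ι} (hv : ‖v‖ = 1) (hw : ‖w‖ = 1) :
    ⟪tracelessOuterVec v, tracelessOuterVec w⟫_𝕜 = ‖⟪v, w⟫_𝕜‖ ^ 2 - (Fintype.card ι : 𝕜)⁻¹ := by
  have hι : (Fintype.card ι : 𝕜) ≠ 0 := Nat.cast_ne_zero.mpr Fintype.card_ne_zero
  simp only [tracelessOuterVec, inner_sub_left, inner_sub_right, inner_smul_left,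
    inner_smul_right, inner_outerVec, inner_identityVec_outerVec, inner_identityVec_self,
    map_inv₀, map_natCast]
  rw [← inner_conj_symm (outerVec v), inner_identityVec_outerVec, inner_self_eq_norm_sq_to_K,
    inner_self_eq_norm_sq_to_K, hv, hw]
  field_simp
  simp
  ring

theorem tracelessOuterVec_mem_orthogonal {v : EuclideanSpace 𝕜 ι} (hv : ‖v‖ = 1) :
    tracelessOuterVec v ∈ (𝕜 ∙ identityVec 𝕜 ι)ᗮ := by
  have hι : (Fintype.card ι : 𝕜) ≠ 0 := Nat.cast_ne_zero.mpr Fintype.card_ne_zero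
  rw [Submodule.mem_orthogonal_singleton_iff_inner_right, tracelessOuterVec, inner_sub_right,
    inner_smul_right, inner_identityVec_outerVec, inner_identityVec_self,
    inner_self_eq_norm_sq_to_K, hv, inv_mul_cancel₀ hι]
  simp

end OuterVector

section OrthogonalityGraph

variable (𝕜 : Type*) {E n : Type*} [RCLike 𝕜] [NormedAddCommGroup E] [InnerProductSpace 𝕜 E]

def orthogonalityGraph (b : n → E) : SimpleGraph n where
  Adj j k := j ≠ k ∧ ⟪b j, b k⟫_𝕜 = 0
  symm := ⟨fun _ _ h => ⟨h.1.symm, inner_eq_zero_symm.mp h.2⟩⟩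
  loopless := ⟨fun _ h => h.1 rfl⟩

variable {𝕜}

theorem orthogonalityGraph_adj {b : n → E} {j k : n} :
    (orthogonalityGraph 𝕜 b).Adj j k ↔ j ≠ k ∧ ⟪b j, b k⟫_𝕜 = 0 :=
  Iff.rfl

end OrthogonalityGraph

section TracelessGram

variable {𝕜 ι n : Type*} [RCLike 𝕜] [Fintype ι] [DecidableEq ι] [Nonempty ι] [DecidableEq n]
  {b : n → EuclideanSpace 𝕜 ι} [DecidableRel (orthogonalityGraph 𝕜 b).Adj]

theorem smul_gram_tracelessOuterVec (hnorm : ∀ j, ‖b j‖ = 1)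
    (hangles : ∀ j k, j ≠ k →
      ‖⟪b j, b k⟫_𝕜‖ ^ 2 = 0 ∨ ‖⟪b j, b k⟫_𝕜‖ ^ 2 = 1 / Fintype.card ι) :
    (Fintype.card ι : 𝕜) • gram 𝕜 (fun j => tracelessOuterVec (b j)) =
      ((Fintype.card ι : 𝕜) - 1) • 1 - (orthogonalityGraph 𝕜 b).adjMatrix 𝕜 := by
  ext j k
  rw [Matrix.smul_apply, gram_apply, inner_tracelessOuterVec (hnorm j) (hnorm k),
    Matrix.sub_apply, Matrix.smul_apply, one_apply, SimpleGraph.adjMatrix_apply]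
  simp only [orthogonalityGraph_adj, smul_eq_mul]
  rcases eq_or_ne j k with rfl | hjk
  · simp [inner_self_eq_norm_sq_to_K, hnorm, mul_sub]
  · by_cases h0 : ⟪b j, b k⟫_𝕜 = 0
    · simp [hjk, h0]
    · have h1 : (‖⟪b j, b k⟫_𝕜‖ : 𝕜) ^ 2 = (Fintype.card ι : 𝕜)⁻¹ := by
        rw [← RCLike.ofReal_pow, (hangles j k hjk).resolve_left (by simpa using h0)]
        simp
      simp [hjk, h0, h1]

variable [Fintype n]

theorem posSemidef_sub_adjMatrix_orthogonalityGraph (hnorm : ∀ j, ‖b j‖ = 1)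
    (hangles : ∀ j k, j ≠ k →
      ‖⟪b j, b k⟫_𝕜‖ ^ 2 = 0 ∨ ‖⟪b j, b k⟫_𝕜‖ ^ 2 = 1 / Fintype.card ι) :
    (((Fintype.card ι : 𝕜) - 1) • 1 - (orthogonalityGraph 𝕜 b).adjMatrix 𝕜).PosSemidef :=
  smul_gram_tracelessOuterVec hnorm hangles ▸ (posSemidef_gram 𝕜 _).smul (Nat.cast_nonneg _)

theorem rank_sub_adjMatrix_orthogonalityGraph_le (hnorm : ∀ j, ‖b j‖ = 1)
    (hangles : ∀ j k, j ≠ k →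
      ‖⟪b j, b k⟫_𝕜‖ ^ 2 = 0 ∨ ‖⟪b j, b k⟫_𝕜‖ ^ 2 = 1 / Fintype.card ι) :
    (((Fintype.card ι : 𝕜) - 1) • 1 - (orthogonalityGraph 𝕜 b).adjMatrix 𝕜).rank ≤
      Fintype.card ι ^ 2 - 1 := by
  rw [← smul_gram_tracelessOuterVec hnorm hangles, rank_smul_of_mem_nonZeroDivisors _
    (mem_nonZeroDivisors_of_ne_zero (Nat.cast_ne_zero.mpr Fintype.card_ne_zero)),
    ← finrank_orthogonal_identityVec (𝕜 := 𝕜)]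
  exact rank_gram_le_finrank_of_mem _ fun j => tracelessOuterVec_mem_orthogonal (hnorm j)

end TracelessGram

/-- Let `d ≥ 1`, `n = d(d+1)`, and let `b 1, …, b n` be unit vectors in `ℂ^d`
such that for every `j ≠ k`, `|⟨b j, b k⟩|²` equals either `0` or `1/d`.  Let `A` be the
adjacency matrix of the orthogonality graph.  Then the eigenvalues of `A` are `−1` with
multiplicity `d² − 1` and `d − 1` with multiplicity `d + 1`; equivalently, the characteristic
polynomial of `A` is `(x + 1)^(d² − 1) · (x − (d − 1))^(d + 1)`. -/
theorem charpoly_orthogonality_adjacency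
    (d n : ℕ) (hd : 1 ≤ d) (hn : n = d * (d + 1))
    (b : Fin n → EuclideanSpace ℂ (Fin d))
    (hnorm : ∀ j, ‖b j‖ = 1)
    (hangles : ∀ j k, j ≠ k →
      ‖(inner ℂ (b j) (b k) : ℂ)‖ ^ 2 = 0 ∨ ‖(inner ℂ (b j) (b k) : ℂ)‖ ^ 2 = 1 / d)
    (A : Matrix (Fin n) (Fin n) ℂ)
    (hA : ∀ j k, A j k = if j ≠ k ∧ (inner ℂ (b j) (b k) : ℂ) = 0 then 1 else 0) :
    A.charpoly = (Polynomial.X + Polynomial.C 1) ^ (d ^ 2 - 1) *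
      (Polynomial.X - Polynomial.C ((d : ℂ) - 1)) ^ (d + 1) := by
  classical
  have : Nonempty (Fin d) := ⟨⟨0, hd⟩⟩
  have hangles' : ∀ j k, j ≠ k → ‖⟪b j, b k⟫_ℂ‖ ^ 2 = 0 ∨
      ‖⟪b j, b k⟫_ℂ‖ ^ 2 = 1 / Fintype.card (Fin d) := by
    simpa only [Fintype.card_fin] using hangles
  set G := orthogonalityGraph ℂ b
  have hAG : A = G.adjMatrix ℂ := by
    ext j k
    simp [hA, G, orthogonalityGraph_adj, SimpleGraph.adjMatrix_apply]
  set B := ((d : ℂ) - 1) • (1 : Matrix (Fin n) (Fin n) ℂ) - G.adjMatrix ℂ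
  have hB : B.PosSemidef := by
    simpa using posSemidef_sub_adjMatrix_orthogonalityGraph hnorm hangles'
  have hrank : B.rank ≤ d ^ 2 - 1 := by
    simpa using rank_sub_adjMatrix_orthogonalityGraph_le hnorm hangles'
  have h1 : 1 ≤ d ^ 2 := Nat.one_le_pow _ _ hd
  have htr : B.trace = ((d ^ 2 - 1 : ℕ) : ℂ) * ((d : ℝ) : ℂ) := by
    rw [G.trace_smul_one_sub_adjMatrix, Fintype.card_fin, hn]
    push_cast [h1]
    ring
  have htr2 : (B * B).trace ≤ ((d : ℝ) : ℂ) * B.trace := by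
    have := G.trace_mul_self_le_of_posSemidef hB
    rwa [sub_add_cancel, ← Complex.ofReal_natCast] at this
  have hAB : A = cfc (fun x : ℝ => (d - 1 : ℝ) - x) B := by
    rw [hB.isHermitian.cfc_const_sub, hAG]
    push_cast
    exact (sub_sub_cancel _ _).symm
  have hcard : n - (d ^ 2 - 1) = d + 1 := by
    have : n = (d ^ 2 - 1) + (d + 1) := by rw [hn]; zify [h1]; ring
    omega
  rw [hAB, hB.isHermitian.charpoly_cfc_of_trace_mul_self_le
      (Nat.cast_ne_zero.mpr (by omega)) hrank htr htr2,
    Fintype.card_fin, hcard]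
  simp only [sub_sub_cancel_left, sub_zero, RCLike.ofReal_one, RCLike.ofReal_sub,
    RCLike.ofReal_natCast, map_neg, sub_neg_eq_add]
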